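/- arXiv:1005.3634 — 5 statements merged into one kernel-verified Lean document; each statement's English description precedes it below -/
import Mathlib

section
/- Let X be a Banach space and T : X → X a bounded linear operator. The following assertions are equivalent: (i) T is Li-Yorke chaotic; (ii) T admits a Li-Yorke pair, i.e. there exist x, y ∈ X with liminf_n ‖T^n x − T^n y‖ = 0 and limsup_n ‖T^n x − T^n y‖ > 0; (iii) T admits an irregular vector. -/
open Filter Topology
open scoped ENNReal

section Defs

variable {𝕜 : Type*} [RCLike 𝕜] {X : Type*} [NormedAddCommGroup X] [NormedSpace 𝕜 X]

/-- The upper density of a set of natural numbers. -/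
noncomputable def upperDensity (A : Set ℕ) : ℝ :=
  Filter.limsup (fun n : ℕ => ((A ∩ Set.Icc 1 n).ncard : ℝ) / n) Filter.atTop

/-- The lower density of a set of natural numbers. -/
noncomputable def lowerDensity (A : Set ℕ) : ℝ :=
  Filter.liminf (fun n : ℕ => ((A ∩ Set.Icc 1 n).ncard : ℝ) / n) Filter.atTop

/-- `{x, y}` is a Li-Yorke pair for `T`. -/
def IsLiYorkePair (T : X →L[𝕜] X) (x y : X) : Prop :=
  Filter.liminf (fun n : ℕ => (‖(T ^ n) x - (T ^ n) y‖₊ : ℝ≥0∞)) Filter.atTop = 0 ∧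
  0 < Filter.limsup (fun n : ℕ => (‖(T ^ n) x - (T ^ n) y‖₊ : ℝ≥0∞)) Filter.atTop

/-- `T` is Li-Yorke chaotic. -/
def LiYorkeChaotic (T : X →L[𝕜] X) : Prop :=
  ∃ Γ : Set X, ¬ Γ.Countable ∧ ∀ x ∈ Γ, ∀ y ∈ Γ, x ≠ y → IsLiYorkePair T x y

/-- `x` is an irregular vector for `T`. -/
def IrregularVector (T : X →L[𝕜] X) (x : X) : Prop :=
  Filter.liminf (fun n : ℕ => (‖(T ^ n) x‖₊ : ℝ≥0∞)) Filter.atTop = 0 ∧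
  Filter.limsup (fun n : ℕ => (‖(T ^ n) x‖₊ : ℝ≥0∞)) Filter.atTop = ⊤

/-- `x` is a distributionally irregular vector for `T`. -/
def DistIrregularVector (T : X →L[𝕜] X) (x : X) : Prop :=
  ∃ a b : ℕ → ℕ, StrictMono a ∧ StrictMono b ∧ (∀ k, 0 < a k) ∧ (∀ k, 0 < b k) ∧
    upperDensity (Set.range a) = 1 ∧ upperDensity (Set.range b) = 1 ∧
    Filter.Tendsto (fun k => ‖(T ^ (a k)) x‖) Filter.atTop (nhds 0) ∧
    Filter.Tendsto (fun k => ‖(T ^ (b k)) x‖) Filter.atTop Filter.atTop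

/-- `Γ` is a distributionally `ε`-scrambled set for `T`. -/
def DistScrambled (T : X →L[𝕜] X) (Γ : Set X) (ε : ℝ) : Prop :=
  ∀ x ∈ Γ, ∀ y ∈ Γ, x ≠ y →
    lowerDensity {n : ℕ | ‖(T ^ n) x - (T ^ n) y‖ < ε} = 0 ∧
    ∀ τ > (0:ℝ), upperDensity {n : ℕ | ‖(T ^ n) x - (T ^ n) y‖ < τ} = 1

/-- `T` is distributionally chaotic. -/
def DistChaotic (T : X →L[𝕜] X) : Prop :=
  ∃ Γ : Set X, ∃ ε > (0:ℝ), ¬ Γ.Countable ∧ DistScrambled T Γ ε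

/-- The Li-Yorke Chaos Criterion. -/
def LYChaosCriterion (T : X →L[𝕜] X) : Prop :=
  ∃ n : ℕ → ℕ, ∃ X₀ : Set X, StrictMono n ∧ (∀ k, 0 < n k) ∧
    (∀ x ∈ X₀, Filter.Tendsto (fun k : ℕ => (T ^ (n k)) x) Filter.atTop (nhds 0)) ∧
    ∀ C : ℝ, ∃ m : ℕ, ∃ y ∈ closure ((Submodule.span 𝕜 X₀ : Submodule 𝕜 X) : Set X),
      C * ‖y‖ < ‖(T ^ m) y‖

/-- The Strong Distributional Chaos Criterion with constant `r`. -/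
def SDCCriterion (T : X →L[𝕜] X) (r : ℝ) : Prop :=
  ∀ m : ℕ, ∃ x : X, x ≠ 0 ∧
    Filter.Tendsto (fun k : ℕ => ‖(T ^ k) x‖) Filter.atTop (nhds 0) ∧
    ∀ i : ℕ, 1 ≤ i → i ≤ m → r ^ i * ‖x‖ ≤ ‖(T ^ i) x‖

/-- The Distributional Chaos Criterion. -/
def DCCriterion (T : X →L[𝕜] X) : Prop :=
  ∃ x y : ℕ → X, ∃ N : ℕ → ℕ,
    (∀ m, x m ≠ 0) ∧ (∀ m, y m ≠ 0) ∧
    (∀ m, y m ∈ closure ((Submodule.span 𝕜 (Set.range x) : Submodule 𝕜 X) : Set X)) ∧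
    (∀ m, Filter.Tendsto (fun n : ℕ => (T ^ n) (x m)) Filter.atTop (nhds 0)) ∧
    (∀ m, 0 < N m) ∧ Monotone N ∧ Filter.Tendsto N Filter.atTop Filter.atTop ∧
    Filter.Tendsto
      (fun m : ℕ =>
        (({i : ℕ | i < N m ∧ (m : ℝ) * ‖y m‖ ≤ ‖(T ^ i) (y m)‖}).ncard : ℝ) / N m)
      Filter.atTop (nhds 1)

/-- `T` admits a dense irregular manifold. -/
def DenseIrregularManifold (T : X →L[𝕜] X) : Prop :=
  ∃ Y : Submodule 𝕜 X, Dense (Y : Set X) ∧ ∀ y ∈ Y, y ≠ 0 → IrregularVector T y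

/-- `T` admits a dense distributionally irregular manifold. -/
def DenseDistIrregularManifold (T : X →L[𝕜] X) : Prop :=
  ∃ Y : Submodule 𝕜 X, Dense (Y : Set X) ∧ ∀ y ∈ Y, y ≠ 0 → DistIrregularVector T y


/-- `S` is strictly singular: it is not bounded below on any infinite-dimensional subspace. -/
def StrictlySingular (S : X →L[𝕜] X) : Prop :=
  ∀ M : Submodule 𝕜 X, ¬ FiniteDimensional 𝕜 M →
    ¬ ∃ c : ℝ, 0 < c ∧ ∀ x ∈ M, c * ‖x‖ ≤ ‖S x‖

end Defs

/-!
If `(x, y)` is a Li-Yorke pair then `z = x - y` is semi-irregular: `‖Tⁿ z‖` is frequently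
arbitrarily small and frequently above some `β > 0`. Let `Y` be the closed linear span of the
orbit of `z`. The iterates of a vector in the span of the orbit are dominated by those of `z`, so
the vectors of `Y` whose orbit comes arbitrarily close to `0` form a dense `Gδ`. The powers of `T`
restricted to `Y` are not uniformly bounded, since a bound `K` would give
`β < ‖Tᵐ z‖ ≤ K ‖Tʲ z‖` whenever `j ≤ m`; by the Banach–Steinhaus condensation argument the
vectors of `Y` with unbounded orbit are residual as well. Baire's theorem yields an irregular
vector `w`, and the line `ℝ w` is an uncountable scrambled set, because the difference of two of
its points is a nonzero multiple of `w`, hence irregular.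
-/

section NormSequences

variable {α E : Type*} [SeminormedAddCommGroup E] {f : Filter α}

theorem coe_nnnorm_lt_ofReal_iff {x : E} {ε : ℝ} (hε : 0 < ε) :
    (‖x‖₊ : ℝ≥0∞) < ENNReal.ofReal ε ↔ ‖x‖ < ε := by
  rw [← enorm_eq_nnnorm, ← ofReal_norm, ENNReal.ofReal_lt_ofReal_iff hε]

theorem liminf_nnnorm_eq_zero_iff {v : α → E} :
    liminf (fun n => (‖v n‖₊ : ℝ≥0∞)) f = 0 ↔ ∀ ε > 0, ∃ᶠ n in f, ‖v n‖ < ε := by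
  rw [← nonpos_iff_eq_zero, liminf_le_iff]
  refine ⟨fun h ε hε => ?_, fun h y hy => ?_⟩
  · exact (h _ (ENNReal.ofReal_pos.2 hε)).mono fun n hn => (coe_nnnorm_lt_ofReal_iff hε).1 hn
  · obtain ⟨r, -, hr, hry⟩ := ENNReal.lt_iff_exists_real_btwn.1 hy
    have hr₀ := ENNReal.ofReal_pos.1 hr
    exact (h r hr₀).mono fun n hn => ((coe_nnnorm_lt_ofReal_iff hr₀).2 hn).trans hry

theorem exists_pos_frequently_lt_norm_of_limsup_pos {v : α → E}
    (h : 0 < limsup (fun n => (‖v n‖₊ : ℝ≥0∞)) f) : ∃ β > 0, ∃ᶠ n in f, β < ‖v n‖ := by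
  obtain ⟨r, hr₀, hr, hrl⟩ := ENNReal.lt_iff_exists_real_btwn.1 h
  refine ⟨r, ENNReal.ofReal_pos.1 hr, (frequently_lt_of_lt_limsup (by isBoundedDefault) hrl).mono
    fun n hn => ?_⟩
  rwa [← enorm_eq_nnnorm, ← ofReal_norm, ENNReal.ofReal_lt_ofReal_iff_of_nonneg hr₀] at hn

theorem limsup_nnnorm_eq_top_of_not_bddAbove {v : ℕ → E}
    (h : ¬ BddAbove (Set.range fun n => ‖v n‖)) :
    limsup (fun n => (‖v n‖₊ : ℝ≥0∞)) atTop = ⊤ := by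
  rw [← top_le_iff, le_limsup_iff]
  intro y hy
  have hM : ∃ᶠ n in atTop, y.toReal < ‖v n‖ := by
    by_contra hle
    exact h (isBoundedUnder_of_eventually_le
      (not_frequently.1 hle |>.mono fun n => le_of_not_gt)).bddAbove_range
  refine hM.mono fun n hn => ?_
  rw [← ENNReal.ofReal_toReal hy.ne, ← enorm_eq_nnnorm, ← ofReal_norm]
  exact (ENNReal.ofReal_lt_ofReal_iff_of_nonneg ENNReal.toReal_nonneg).2 hn

end NormSequences

section Baire

variable {Y : Type*} [TopologicalSpace Y]

theorem eventually_residual_frequently_mem {S : ℕ → Set Y} (hS : ∀ n, IsOpen (S n))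
    (hd : ∀ N, Dense (⋃ n ≥ N, S n)) : ∀ᶠ y in residual Y, ∃ᶠ n in atTop, y ∈ S n := by
  simp only [frequently_atTop]
  refine eventually_countable_forall.2 fun N => ?_
  filter_upwards [residual_of_dense_open (isOpen_biUnion fun n _ => hS n) (hd N)] with y hy
  obtain ⟨n, hNn, hn⟩ := Set.mem_iUnion₂.1 hy
  exact ⟨n, hNn, hn⟩

theorem eventually_residual_forall_frequently_lt {g : ℕ → Y → ℝ} (hg : ∀ n, Continuous (g n))
    {D : Set Y} (hD : Dense D) (h : ∀ y ∈ D, ∀ ε > 0, ∃ᶠ n in atTop, g n y < ε) :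
    ∀ᶠ y in residual Y, ∀ ε > 0, ∃ᶠ n in atTop, g n y < ε := by
  have hk : ∀ᶠ y in residual Y, ∀ k : ℕ, ∃ᶠ n in atTop, g n y < 1 / (k + 1) := by
    refine eventually_countable_forall.2 fun k =>
      eventually_residual_frequently_mem (fun n => isOpen_lt (hg n) continuous_const)
        fun N => hD.mono fun y hy => ?_
    obtain ⟨n, hNn, hn⟩ := frequently_atTop.1 (h y hy _ Nat.one_div_pos_of_nat) N
    exact Set.mem_iUnion₂.2 ⟨n, hNn, hn⟩
  filter_upwards [hk] with y hy ε hε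
  obtain ⟨k, hk⟩ := exists_nat_one_div_lt hε
  exact (hy k).mono fun n hn => hn.trans hk

end Baire

namespace ContinuousLinearMap

variable {𝕜 E F ι : Type*} [DenselyNormedField 𝕜] [NormedAddCommGroup E] [NormedSpace 𝕜 E]
  [NormedAddCommGroup F] [NormedSpace 𝕜 F] {g : ι → E →L[𝕜] F}

theorem dense_setOf_exists_lt_norm_apply (hg : ¬ BddAbove (Set.range fun i => ‖g i‖)) (M : ℝ) :
    Dense {x | ∃ i, M < ‖g i x‖} := by
  rw [Metric.dense_iff]
  intro x₀ r hr
  by_cases hx₀ : ∃ i, M < ‖g i x₀‖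
  · exact ⟨x₀, Metric.mem_ball_self hr, hx₀⟩
  push Not at hx₀
  obtain ⟨c, hc₀, hcr⟩ := NormedField.exists_norm_lt 𝕜 hr
  obtain ⟨-, ⟨i, rfl⟩, hi⟩ := not_bddAbove_iff.1 hg ((2 * |M| + 1) / ‖c‖)
  obtain ⟨u, hu, hgu⟩ := (g i).exists_lt_apply_of_lt_opNorm hi
  refine ⟨x₀ + c • u, ?_, i, ?_⟩
  · rw [Metric.mem_ball, dist_self_add_left, norm_smul]
    exact (mul_le_of_le_one_right hc₀.le hu.le).trans_lt hcr
  · have hcu : 2 * |M| + 1 < ‖g i (c • u)‖ := by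
      rw [map_smul, norm_smul]
      exact (div_lt_iff₀' hc₀).1 hgu
    have htri : ‖g i (c • u)‖ ≤ ‖g i (x₀ + c • u)‖ + ‖g i x₀‖ := by
      simpa using norm_sub_le (g i (x₀ + c • u)) (g i x₀)
    linarith [le_abs_self M, hx₀ i]

theorem eventually_residual_not_bddAbove_norm_apply
    (hg : ¬ BddAbove (Set.range fun i => ‖g i‖)) :
    ∀ᶠ x in residual E, ¬ BddAbove (Set.range fun i => ‖g i x‖) := by
  have hM : ∀ᶠ x in residual E, ∀ M : ℕ, ∃ i, (M : ℝ) < ‖g i x‖ := by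
    refine eventually_countable_forall.2 fun M => residual_of_dense_open ?_
      (dense_setOf_exists_lt_norm_apply hg M)
    simp only [Set.ofPred_exists]
    exact isOpen_iUnion fun i => isOpen_lt continuous_const (g i).continuous.norm
  filter_upwards [hM] with x hx ⟨C, hC⟩
  obtain ⟨M, hCM⟩ := exists_nat_ge C
  obtain ⟨i, hi⟩ := hx M
  exact (hC ⟨i, rfl⟩).not_gt (hCM.trans_lt hi)

end ContinuousLinearMap

section Orbit

variable {𝕜 X : Type*} [NontriviallyNormedField 𝕜] [NormedAddCommGroup X] [NormedSpace 𝕜 X]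
  (T : X →L[𝕜] X) {z : X}

theorem exists_norm_pow_apply_le_of_mem_span_orbit {v : X}
    (hv : v ∈ Submodule.span 𝕜 (Set.range fun i => (T ^ i) z)) :
    ∃ C, 0 ≤ C ∧ ∀ n, ‖(T ^ n) v‖ ≤ C * ‖(T ^ n) z‖ := by
  induction hv using Submodule.span_induction with
  | mem x hx =>
    obtain ⟨i, rfl⟩ := hx
    refine ⟨‖T ^ i‖, norm_nonneg _, fun n => ?_⟩
    rw [← mul_apply_eq_comp, ((Commute.refl T).pow_pow n i).eq, mul_apply_eq_comp]
    exact (T ^ i).le_opNorm _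
  | zero => exact ⟨0, le_rfl, fun n => by simp⟩
  | add x y _ _ hx hy =>
    obtain ⟨C₁, hC₁, hx⟩ := hx
    obtain ⟨C₂, hC₂, hy⟩ := hy
    refine ⟨C₁ + C₂, add_nonneg hC₁ hC₂, fun n => ?_⟩
    calc ‖(T ^ n) (x + y)‖ ≤ ‖(T ^ n) x‖ + ‖(T ^ n) y‖ := by
          rw [map_add]; exact norm_add_le _ _
      _ ≤ (C₁ + C₂) * ‖(T ^ n) z‖ := by linarith [hx n, hy n]
  | smul a x _ hx =>
    obtain ⟨C, hC, hx⟩ := hx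
    refine ⟨‖a‖ * C, mul_nonneg (norm_nonneg _) hC, fun n => ?_⟩
    rw [map_smul, norm_smul, mul_assoc]
    exact mul_le_mul_of_nonneg_left (hx n) (norm_nonneg _)

theorem frequently_norm_pow_apply_lt_of_mem_span_orbit
    (hz : ∀ ε > 0, ∃ᶠ n in atTop, ‖(T ^ n) z‖ < ε) {v : X}
    (hv : v ∈ Submodule.span 𝕜 (Set.range fun i => (T ^ i) z)) :
    ∀ ε > 0, ∃ᶠ n in atTop, ‖(T ^ n) v‖ < ε := by
  intro ε hε
  obtain ⟨C, hC, hCv⟩ := exists_norm_pow_apply_le_of_mem_span_orbit T hv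
  refine (hz (ε / (C + 1)) (by positivity)).mono fun n hn => ?_
  calc ‖(T ^ n) v‖ ≤ C * ‖(T ^ n) z‖ := hCv n
    _ ≤ (C + 1) * ‖(T ^ n) z‖ := by nlinarith [norm_nonneg ((T ^ n) z)]
    _ < ε := (lt_div_iff₀' (by positivity)).1 hn

theorem not_bddAbove_norm_pow_comp_subtypeL (hz : ∀ ε > 0, ∃ᶠ n in atTop, ‖(T ^ n) z‖ < ε)
    {β : ℝ} (hβ : 0 < β) (hzβ : ∃ᶠ n in atTop, β < ‖(T ^ n) z‖) {Y : Submodule 𝕜 X}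
    (hY : ∀ n, (T ^ n) z ∈ Y) : ¬ BddAbove (Set.range fun n => ‖(T ^ n).comp Y.subtypeL‖) := by
  rintro ⟨K, hK⟩
  have hK₀ : 0 ≤ K := (norm_nonneg _).trans (hK ⟨0, rfl⟩)
  obtain ⟨j, hj⟩ := (hz (β / (K + 1)) (by positivity)).exists
  obtain ⟨m, hjm, hm⟩ := frequently_atTop.1 hzβ j
  have hshift : (T ^ m) z = ((T ^ (m - j)).comp Y.subtypeL) ⟨(T ^ j) z, hY j⟩ := by
    rw [ContinuousLinearMap.comp_apply, Submodule.subtypeL_apply, ← mul_apply_eq_comp,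
      ← pow_add, Nat.sub_add_cancel hjm]
  have : ‖(T ^ m) z‖ < β := calc
    ‖(T ^ m) z‖ ≤ ‖(T ^ (m - j)).comp Y.subtypeL‖ * ‖(T ^ j) z‖ :=
      hshift ▸ ContinuousLinearMap.le_opNorm _ _
    _ ≤ (K + 1) * ‖(T ^ j) z‖ := by nlinarith [hK ⟨m - j, rfl⟩, norm_nonneg ((T ^ j) z)]
    _ < β := (lt_div_iff₀' (by positivity)).1 hj
  exact hm.not_gt this

end Orbit

section LiYorke

variable {𝕜 X : Type*} [RCLike 𝕜] [NormedAddCommGroup X] [NormedSpace 𝕜 X] {T : X →L[𝕜] X}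

def SemiIrregularVector (T : X →L[𝕜] X) (x : X) : Prop :=
  liminf (fun n => (‖(T ^ n) x‖₊ : ℝ≥0∞)) atTop = 0 ∧
  0 < limsup (fun n => (‖(T ^ n) x‖₊ : ℝ≥0∞)) atTop

theorem isLiYorkePair_iff_semiIrregularVector_sub {x y : X} :
    IsLiYorkePair T x y ↔ SemiIrregularVector T (x - y) := by
  simp only [IsLiYorkePair, SemiIrregularVector, map_sub]

theorem IrregularVector.semiIrregularVector {x : X} (hx : IrregularVector T x) :
    SemiIrregularVector T x :=
  ⟨hx.1, hx.2 ▸ ENNReal.zero_lt_top⟩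

theorem IrregularVector.smul {x : X} (hx : IrregularVector T x) {c : 𝕜} (hc : c ≠ 0) :
    IrregularVector T (c • x) := by
  simp only [IrregularVector, map_smul, nnnorm_smul, ENNReal.coe_mul]
  rw [ENNReal.liminf_const_mul_of_ne_top ENNReal.coe_ne_top,
    ENNReal.limsup_const_mul_of_ne_top ENNReal.coe_ne_top, hx.1, hx.2]
  exact ⟨mul_zero _, ENNReal.mul_top (by simpa using hc)⟩

theorem IrregularVector.ne_zero {x : X} (hx : IrregularVector T x) : x ≠ 0 := by
  rintro rfl
  simpa using hx.2

theorem liYorkeChaotic_of_irregularVector {w : X} (hw : IrregularVector T w) :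
    LiYorkeChaotic T := by
  have hinj : Function.Injective fun t : ℝ => (t : 𝕜) • w :=
    (smul_left_injective 𝕜 hw.ne_zero).comp RCLike.ofReal_injective
  refine ⟨Set.range fun t : ℝ => (t : 𝕜) • w, fun h => ?_, ?_⟩
  · exact Cardinal.not_countable_real (by simpa using h.preimage hinj)
  · rintro _ ⟨s, rfl⟩ _ ⟨t, rfl⟩ hst
    rw [isLiYorkePair_iff_semiIrregularVector_sub, ← sub_smul]
    exact (hw.smul (sub_ne_zero.2 fun h => hst (congrArg (· • w) h))).semiIrregularVector

theorem LiYorkeChaotic.exists_isLiYorkePair (h : LiYorkeChaotic T) :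
    ∃ x y : X, IsLiYorkePair T x y := by
  obtain ⟨Γ, hΓ, hpair⟩ := h
  obtain ⟨x, hx, y, hy, hxy⟩ := Set.not_subsingleton_iff.1 fun hs => hΓ hs.countable
  exact ⟨x, y, hpair x hx y hy hxy⟩

theorem SemiIrregularVector.exists_irregularVector [CompleteSpace X] {z : X}
    (hz : SemiIrregularVector T z) : ∃ w, IrregularVector T w := by
  obtain ⟨hz₀, hzβ⟩ := hz
  rw [liminf_nnnorm_eq_zero_iff] at hz₀
  obtain ⟨β, hβ, hzβ⟩ := exists_pos_frequently_lt_norm_of_limsup_pos hzβ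
  let p := Submodule.span 𝕜 (Set.range fun n => (T ^ n) z)
  let Y := p.topologicalClosure
  have : CompleteSpace Y := p.isClosed_topologicalClosure.completeSpace_coe
  have hdense : Dense ((↑) ⁻¹' (p : Set X) : Set Y) := by
    refine Subtype.dense_iff.2 fun x hx => closure_mono ?_ hx
    exact fun v hv => ⟨⟨v, p.le_topologicalClosure hv⟩, hv, rfl⟩
  have hsmall : ∀ᶠ y : Y in residual Y, ∀ ε > 0, ∃ᶠ n in atTop, ‖(T ^ n) y‖ < ε :=
    eventually_residual_forall_frequently_lt
      (fun n => ((T ^ n).continuous.comp continuous_subtype_val).norm) hdense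
      fun y hy => frequently_norm_pow_apply_lt_of_mem_span_orbit T hz₀ hy
  have hlarge := ContinuousLinearMap.eventually_residual_not_bddAbove_norm_apply <|
    not_bddAbove_norm_pow_comp_subtypeL T hz₀ hβ hzβ fun n =>
      p.le_topologicalClosure (Submodule.subset_span ⟨n, rfl⟩)
  obtain ⟨y, hy_small, hy_large⟩ := (dense_of_mem_residual (hsmall.and hlarge)).nonempty
  simp only [ContinuousLinearMap.comp_apply, Submodule.subtypeL_apply] at hy_large
  exact ⟨y, liminf_nnnorm_eq_zero_iff.2 hy_small, limsup_nnnorm_eq_top_of_not_bddAbove hy_large⟩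

end LiYorke

/-- Theorem 2.1: `T` is Li-Yorke chaotic iff it admits a Li-Yorke pair iff it admits an
irregular vector. -/
theorem liYorkeChaotic_iff_liYorkePair_iff_irregularVector
    {𝕜 : Type*} [RCLike 𝕜] {X : Type*} [NormedAddCommGroup X] [NormedSpace 𝕜 X]
    [CompleteSpace X] (T : X →L[𝕜] X) :
    (LiYorkeChaotic T ↔ ∃ x y : X, IsLiYorkePair T x y) ∧
    (LiYorkeChaotic T ↔ ∃ x : X, IrregularVector T x) := by
  have pair_to_irregular : (∃ x y : X, IsLiYorkePair T x y) → ∃ w, IrregularVector T w :=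
    fun ⟨x, y, hxy⟩ => (isLiYorkePair_iff_semiIrregularVector_sub.1 hxy).exists_irregularVector
  have irregular_to_chaotic : (∃ w, IrregularVector T w) → LiYorkeChaotic T :=
    fun ⟨w, hw⟩ => liYorkeChaotic_of_irregularVector hw
  exact ⟨⟨LiYorkeChaotic.exists_isLiYorkePair, irregular_to_chaotic ∘ pair_to_irregular⟩,
    ⟨pair_to_irregular ∘ LiYorkeChaotic.exists_isLiYorkePair, irregular_to_chaotic⟩⟩
end

section
/- Let X be a Banach space and T : X → X a bounded linear operator. If T is Li-Yorke chaotic, then T^n is Li-Yorke chaotic for every positive integer n. -/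
open Filter Topology
open scoped ENNReal

/-!
The same scrambled set works for `T ^ n`. For a pair `x, y` put `g k = ‖T^k x - T^k y‖`, so
`g (a + k) ≤ ‖T^a‖ g k`. Every `k` lies at most `n` steps before and less than `n` steps after a
multiple of `n`, and `‖T^a‖ ≤ M` for `a ≤ n`; hence `liminf_m g (n m) ≤ M · liminf g` and
`limsup g ≤ M · limsup_m g (n m)`, which transfer both Li-Yorke conditions from `T` to `T ^ n`.
-/

namespace ENNReal

variable {g : ℕ → ℝ≥0∞} {n : ℕ} {M : ℝ≥0∞}

theorem liminf_comp_mul_le_mul_liminf (hn : 0 < n) (hM : M ≠ ⊤)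
    (hg : ∀ a ≤ n, ∀ k, g (a + k) ≤ M * g k) :
    liminf (fun m => g (n * m)) atTop ≤ M * liminf g atTop := by
  have hnext : ∀ k, g (n * (k / n + 1)) ≤ M * g k := fun k => by
    have hk : n * (k / n + 1) = (n - k % n) + k := by
      have := Nat.div_add_mod k n
      have := Nat.mod_lt k hn
      rw [mul_add, mul_one]
      omega
    rw [hk]
    exact hg _ (Nat.sub_le n _) k
  have hφ : Tendsto (fun k => k / n + 1) atTop atTop :=
    tendsto_atTop_mono (fun _ => Nat.le_succ _) (Nat.tendsto_div_const_atTop hn.ne')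
  calc liminf (fun m => g (n * m)) atTop
      ≤ liminf ((fun m => g (n * m)) ∘ fun k => k / n + 1) atTop := hφ.liminf_le_liminf_comp
    _ ≤ liminf (fun k => M * g k) atTop := liminf_le_liminf (.of_forall hnext)
    _ = M * liminf g atTop := liminf_const_mul_of_ne_top hM

theorem limsup_le_mul_limsup_comp_mul (hn : 0 < n) (hM : M ≠ ⊤)
    (hg : ∀ a ≤ n, ∀ k, g (a + k) ≤ M * g k) :
    limsup g atTop ≤ M * limsup (fun m => g (n * m)) atTop := by
  have hprev : ∀ k, g k ≤ M * g (n * (k / n)) := fun k => by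
    conv_lhs => rw [← Nat.mod_add_div k n]
    exact hg _ (Nat.mod_lt k hn).le _
  calc limsup g atTop
      ≤ limsup (fun k => M * g (n * (k / n))) atTop := limsup_le_limsup (.of_forall hprev)
    _ = M * limsup ((fun m => g (n * m)) ∘ fun k => k / n) atTop :=
        limsup_const_mul_of_ne_top hM
    _ ≤ M * limsup (fun m => g (n * m)) atTop :=
        mul_le_mul_right (Nat.tendsto_div_const_atTop hn.ne').limsup_comp_le_limsup M

end ENNReal

theorem ContinuousLinearMap.nnnorm_pow_add_apply_sub_le {𝕜 X : Type*}
    [NontriviallyNormedField 𝕜] [SeminormedAddCommGroup X] [NormedSpace 𝕜 X] (T : X →L[𝕜] X)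
    (a k : ℕ) (x y : X) :
    ‖(T ^ (a + k)) x - (T ^ (a + k)) y‖₊ ≤ ‖T ^ a‖₊ * ‖(T ^ k) x - (T ^ k) y‖₊ := by
  rw [pow_add]
  exact ((T ^ a).le_opNNNorm _).trans_eq' (by rw [map_sub]; rfl)

theorem IsLiYorkePair.pow {𝕜 X : Type*} [RCLike 𝕜] [NormedAddCommGroup X] [NormedSpace 𝕜 X]
    {T : X →L[𝕜] X} {x y : X} (h : IsLiYorkePair T x y) {n : ℕ} (hn : 0 < n) :
    IsLiYorkePair (T ^ n) x y := by
  set g : ℕ → ℝ≥0∞ := fun k => ‖(T ^ k) x - (T ^ k) y‖₊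
  set M : NNReal := (Finset.range (n + 1)).sup fun a => ‖T ^ a‖₊
  have hg : ∀ a ≤ n, ∀ k, g (a + k) ≤ M * g k := fun a ha k => by
    have hTa : ‖T ^ a‖₊ ≤ M :=
      Finset.le_sup (f := fun a => ‖T ^ a‖₊) (Finset.mem_range.mpr (Nat.lt_succ_of_le ha))
    simp only [g]
    exact_mod_cast (T.nnnorm_pow_add_apply_sub_le a k x y).trans (mul_le_mul_left hTa _)
  have hsub :
      (fun m : ℕ => (‖((T ^ n) ^ m) x - ((T ^ n) ^ m) y‖₊ : ℝ≥0∞)) = fun m => g (n * m) := by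
    simp only [g, ← pow_mul]
  rw [IsLiYorkePair, hsub]
  constructor
  · refine nonpos_iff_eq_zero.mp
      ((ENNReal.liminf_comp_mul_le_mul_liminf hn ENNReal.coe_ne_top hg).trans ?_)
    rw [h.1, mul_zero]
  · exact (ENNReal.mul_pos_iff.mp
      (h.2.trans_le (ENNReal.limsup_le_mul_limsup_comp_mul hn ENNReal.coe_ne_top hg))).2

theorem liYorkeChaotic_pow_general
    {𝕜 : Type*} [RCLike 𝕜] {X : Type*} [NormedAddCommGroup X] [NormedSpace 𝕜 X]
    (T : X →L[𝕜] X) (h : LiYorkeChaotic T) (n : ℕ) (hn : 0 < n) :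
    LiYorkeChaotic (T ^ n) := by
  obtain ⟨Γ, hΓ, hscrambled⟩ := h
  exact ⟨Γ, hΓ, fun x hx y hy hxy => (hscrambled x hx y hy hxy).pow hn⟩

/-- If `T` is Li-Yorke chaotic, then so is `T ^ n` for every positive integer `n`. -/
theorem liYorkeChaotic_pow
    {𝕜 : Type*} [RCLike 𝕜] {X : Type*} [NormedAddCommGroup X] [NormedSpace 𝕜 X]
    [CompleteSpace X] (T : X →L[𝕜] X) (h : LiYorkeChaotic T) (n : ℕ) (hn : 0 < n) :
    LiYorkeChaotic (T ^ n) :=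
  liYorkeChaotic_pow_general T h n hn
end

section
/- Let X be a complex Banach space and T : X → X a bounded linear operator. If T satisfies the Strong Distributional Chaos Criterion with SDCC-constant r > 1, then for every r₀ with 1 ≤ r₀ ≤ r the spectrum of T intersects the circle {λ ∈ ℂ : |λ| = r₀}. -/
open Filter Topology
open scoped ENNReal

/-! If the circle `‖λ‖ = r₀` missed `σ(T)`, then, the spectrum being compact, so would a circle
`‖λ‖ = ρ` with `1 < ρ < r`. For a vector `x` with bounded orbit, `g z = ∑ zⁿ • Tⁿ x` is holomorphic
on the unit disc and equals `(1 - z • T)⁻¹ x` on the circle `‖z‖ = ρ⁻¹`, where these inverses are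
uniformly bounded by some `C`. Cauchy's estimate for the Taylor coefficients of `g` then gives
`‖Tⁿ x‖ ≤ C ρⁿ ‖x‖`, which the SDCC vectors, with `‖Tᵐ x‖ ≥ rᵐ ‖x‖` for arbitrarily large `m`,
violate. -/

open Metric Set

namespace FormalMultilinearSeries

variable (𝕜 : Type*) {E : Type*} [NontriviallyNormedField 𝕜] [NormedAddCommGroup E]
  [NormedSpace 𝕜 E]

def ofCoeffs (a : ℕ → E) : FormalMultilinearSeries 𝕜 𝕜 E :=
  fun n => ContinuousMultilinearMap.mkPiRing 𝕜 (Fin n) (a n)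

variable {𝕜}

@[simp]
theorem coeff_ofCoeffs (a : ℕ → E) (n : ℕ) : (ofCoeffs 𝕜 a).coeff n = a n := by
  simp [coeff, ofCoeffs]

theorem sum_ofCoeffs (a : ℕ → E) (z : 𝕜) : (ofCoeffs 𝕜 a).sum z = ∑' n, z ^ n • a n := by
  simp [FormalMultilinearSeries.sum]

theorem one_le_radius_ofCoeffs {a : ℕ → E} (ha : BddAbove (range fun n => ‖a n‖)) :
    1 ≤ (ofCoeffs 𝕜 a).radius := by
  obtain ⟨C, hC⟩ := ha
  exact_mod_cast (ofCoeffs 𝕜 a).le_radius_of_bound C (r := 1) fun n => by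
    simpa using hC (mem_range_self n)

end FormalMultilinearSeries

theorem HasFPowerSeriesOnBall.norm_coeff_le_of_forall_mem_sphere_norm_le
    {E : Type*} [NormedAddCommGroup E] [NormedSpace ℂ E] [CompleteSpace E]
    {f : ℂ → E} {p : FormalMultilinearSeries ℂ ℂ E} {c : ℂ} {R : ℝ≥0∞} {s C : ℝ}
    (hf : HasFPowerSeriesOnBall f p c R) (hs : 0 < s) (hsR : ENNReal.ofReal s < R)
    (hC : ∀ z ∈ sphere c s, ‖f z‖ ≤ C) (n : ℕ) :
    ‖p.coeff n‖ ≤ C / s ^ n := by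
  have hdiff : DiffContOnCl ℂ f (ball c s) := by
    refine (hf.differentiableOn.mono ?_).diffContOnCl
    rw [closure_ball c hs.ne', ← closedEBall_ofReal hs.le]
    exact fun z hz => (mem_closedEBall.1 hz).trans_lt hsR
  have hderiv : iteratedDeriv n f c = n.factorial • p.coeff n := by
    simpa [iteratedDeriv_eq_iteratedFDeriv] using (hf.factorial_smul 1 n).symm
  have := Complex.norm_iteratedDeriv_le_of_forall_mem_sphere_norm_le n hs hdiff hC
  rw [hderiv, RCLike.norm_nsmul (K := ℂ), nsmul_eq_mul, mul_div_assoc] at this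
  exact le_of_mul_le_mul_left this (by positivity : (0 : ℝ) < n.factorial)

section OrbitSeries

variable {𝕜 E : Type*} [NontriviallyNormedField 𝕜] [NormedAddCommGroup E] [NormedSpace 𝕜 E]
  [CompleteSpace E] {T : E →L[𝕜] E} {x : E} {z : 𝕜}

theorem summable_pow_smul_pow_apply (hx : BddAbove (range fun n => ‖(T ^ n) x‖)) (hz : ‖z‖ < 1) :
    Summable fun n => z ^ n • (T ^ n) x := by
  obtain ⟨B, hB⟩ := hx
  refine .of_norm_bounded ((summable_geometric_of_lt_one (norm_nonneg z) hz).mul_right B)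
    fun n => ?_
  rw [norm_smul, norm_pow]
  exact mul_le_mul_of_nonneg_left (hB (mem_range_self n)) (by positivity)

theorem one_sub_smul_apply_tsum_pow_smul_pow_apply (hx : BddAbove (range fun n => ‖(T ^ n) x‖))
    (hz : ‖z‖ < 1) : (1 - z • T) (∑' n, z ^ n • (T ^ n) x) = x := by
  have hs := summable_pow_smul_pow_apply hx hz
  have hstep : ∀ n, (1 - z • T) (z ^ n • (T ^ n) x) =
      z ^ n • (T ^ n) x - z ^ (n + 1) • (T ^ (n + 1)) x := fun n => by
    simp [pow_succ', smul_sub, smul_smul, mul_comm]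
  rw [ContinuousLinearMap.map_tsum _ hs, tsum_congr hstep,
    hs.tsum_sub ((summable_nat_add_iff 1).2 hs), hs.tsum_eq_zero_add]
  simp

theorem norm_tsum_pow_smul_pow_apply_le (hx : BddAbove (range fun n => ‖(T ^ n) x‖))
    (hz : ‖z‖ < 1) (hu : IsUnit (1 - z • T)) :
    ‖∑' n, z ^ n • (T ^ n) x‖ ≤ ‖Ring.inverse (1 - z • T)‖ * ‖x‖ := by
  have heq : ∑' n, z ^ n • (T ^ n) x = Ring.inverse (1 - z • T) x := by
    have h := congrArg (Ring.inverse (1 - z • T : E →L[𝕜] E) ·)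
      (one_sub_smul_apply_tsum_pow_smul_pow_apply hx hz)
    rwa [← mul_apply_eq_comp, Ring.inverse_mul_cancel _ hu, one_apply_eq_self] at h
  rw [heq]
  exact (Ring.inverse (1 - z • T)).le_opNorm x

end OrbitSeries

theorem IsCompact.exists_forall_norm_inverse_le {α R : Type*} [TopologicalSpace α] [NormedRing R]
    [HasSummableGeomSeries R] {K : Set α} {f : α → R} (hK : IsCompact K) (hf : ContinuousOn f K)
    (hu : ∀ a ∈ K, IsUnit (f a)) : ∃ C, ∀ a ∈ K, ‖Ring.inverse (f a)‖ ≤ C :=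
  hK.exists_bound_of_continuousOn fun a ha =>
    ((hu a ha).unit_spec ▸ NormedRing.inverse_continuousAt (hu a ha).unit).comp_continuousWithinAt
      (hf a ha)

theorem isUnit_one_sub_smul_of_inv_notMem_spectrum {𝕜 A : Type*} [Field 𝕜] [Ring A] [Algebra 𝕜 A]
    {a : A} {z : 𝕜} (hz : z ≠ 0) (h : z⁻¹ ∉ spectrum 𝕜 a) : IsUnit (1 - z • a) := by
  have hu : IsUnit ((Units.mk0 z hz)⁻¹ • (1 : A) - a) := by
    rw [Units.smul_def, ← Algebra.algebraMap_eq_smul_one]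
    exact spectrum.notMem_iff.1 (by simpa using h)
  rwa [IsUnit.smul_sub_iff_sub_inv_smul, inv_inv] at hu

theorem exists_norm_pow_apply_le_of_forall_norm_ne_of_mem_spectrum
    {E : Type*} [NormedAddCommGroup E] [NormedSpace ℂ E] [CompleteSpace E] (T : E →L[ℂ] E)
    {ρ : ℝ} (hρ : 1 < ρ) (hT : ∀ μ ∈ spectrum ℂ T, ‖μ‖ ≠ ρ) :
    ∃ C, ∀ x, BddAbove (range fun n => ‖(T ^ n) x‖) → ∀ n, ‖(T ^ n) x‖ ≤ C * ρ ^ n * ‖x‖ := by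
  have hs : 0 < ρ⁻¹ := inv_pos.2 (zero_lt_one.trans hρ)
  have hu : ∀ z ∈ sphere (0 : ℂ) ρ⁻¹, IsUnit (1 - z • T) := fun z hz => by
    rw [mem_sphere_zero_iff_norm] at hz
    refine isUnit_one_sub_smul_of_inv_notMem_spectrum (norm_pos_iff.1 (hz ▸ hs)) fun hmem => ?_
    exact hT _ hmem (by rw [norm_inv, hz, inv_inv])
  obtain ⟨C, hC⟩ := (isCompact_sphere (0 : ℂ) ρ⁻¹).exists_forall_norm_inverse_le (by fun_prop) hu
  refine ⟨C, fun x hx n => ?_⟩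
  set p := FormalMultilinearSeries.ofCoeffs ℂ fun n => (T ^ n) x
  have hp : 1 ≤ p.radius := FormalMultilinearSeries.one_le_radius_ofCoeffs hx
  have hρR : ENNReal.ofReal ρ⁻¹ < p.radius :=
    lt_of_lt_of_le (by simpa using inv_lt_one_of_one_lt₀ hρ) hp
  have hsum : ∀ z ∈ sphere (0 : ℂ) ρ⁻¹, ‖p.sum z‖ ≤ C * ‖x‖ := fun z hz => by
    have hz1 : ‖z‖ < 1 := by
      rw [mem_sphere_zero_iff_norm.1 hz]; exact inv_lt_one_of_one_lt₀ hρ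
    rw [FormalMultilinearSeries.sum_ofCoeffs]
    exact (norm_tsum_pow_smul_pow_apply_le hx hz1 (hu z hz)).trans
      (mul_le_mul_of_nonneg_right (hC z hz) (norm_nonneg x))
  simpa [p, div_eq_mul_inv, mul_right_comm] using
    (p.hasFPowerSeriesOnBall (zero_lt_one.trans_le hp)).norm_coeff_le_of_forall_mem_sphere_norm_le
      hs hρR hsum n

theorem IsCompact.exists_mem_Ioo_forall_norm_ne {E : Type*} [SeminormedAddCommGroup E]
    {K : Set E} (hK : IsCompact K) {a b r₀ : ℝ} (hab : a < b) (hr₀ : r₀ ∈ Icc a b)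
    (hK₀ : ∀ μ ∈ K, ‖μ‖ ≠ r₀) : ∃ ρ ∈ Ioo a b, ∀ μ ∈ K, ‖μ‖ ≠ ρ := by
  have hopen : IsOpen (norm '' K)ᶜ := (hK.image continuous_norm).isClosed.isOpen_compl
  have hr₀K : r₀ ∈ (norm '' K)ᶜ := by
    rintro ⟨μ, hμ, hμr₀⟩
    exact hK₀ μ hμ hμr₀
  rw [← closure_Ioo hab.ne] at hr₀
  obtain ⟨ρ, hρK, hρ⟩ := mem_closure_iff.1 hr₀ _ hopen hr₀K
  exact ⟨ρ, hρ, fun μ hμ hμρ => hρK ⟨μ, hμ, hμρ⟩⟩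

theorem SDCCriterion.not_forall_norm_pow_apply_le {𝕜 X : Type*} [RCLike 𝕜] [NormedAddCommGroup X]
    [NormedSpace 𝕜 X] {T : X →L[𝕜] X} {r : ℝ} (h : SDCCriterion T r) {ρ C : ℝ} (hρ : 0 < ρ)
    (hρr : ρ < r) :
    ¬ ∀ x, Tendsto (fun k => ‖(T ^ k) x‖) atTop (𝓝 0) → ∀ n, ‖(T ^ n) x‖ ≤ C * ρ ^ n * ‖x‖ := by
  intro hC
  have hrρ : 1 < r / ρ := (one_lt_div hρ).2 hρr
  obtain ⟨n, hn⟩ := pow_unbounded_of_one_lt C hrρ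
  obtain ⟨x, hx0, hxT, hxr⟩ := h (n + 1)
  have hgrowth : r ^ (n + 1) * ‖x‖ ≤ C * ρ ^ (n + 1) * ‖x‖ :=
    (hxr (n + 1) le_add_self le_rfl).trans (hC x hxT (n + 1))
  have hle : (r / ρ) ^ (n + 1) ≤ C := by
    rw [div_pow, div_le_iff₀ (by positivity)]
    exact le_of_mul_le_mul_right hgrowth (norm_pos_iff.2 hx0)
  exact (hn.trans_le (pow_le_pow_right₀ hrρ.le n.le_succ)).not_ge hle

/-- If `T` satisfies the SDCC with constant `r > 1`, then for every `1 ≤ r₀ ≤ r` the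
spectrum of `T` meets the circle of radius `r₀`. -/
theorem SDCC_spectrum_meets_circles
    {X : Type*} [NormedAddCommGroup X] [NormedSpace ℂ X] [CompleteSpace X]
    (T : X →L[ℂ] X) (r : ℝ) (hr : 1 < r) (h : SDCCriterion T r)
    (r₀ : ℝ) (h₁ : 1 ≤ r₀) (h₂ : r₀ ≤ r) :
    ∃ lam ∈ spectrum ℂ T, ‖lam‖ = r₀ := by
  by_contra! hT
  obtain ⟨ρ, ⟨hρ1, hρr⟩, hρ⟩ := (spectrum.isCompact T).exists_mem_Ioo_forall_norm_ne hr ⟨h₁, h₂⟩ hT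
  obtain ⟨C, hC⟩ := exists_norm_pow_apply_le_of_forall_norm_ne_of_mem_spectrum T hρ1 hρ
  exact h.not_forall_norm_pow_apply_le (zero_lt_one.trans hρ1) hρr fun x hx =>
    hC x hx.bddAbove_range
end

section
/- Let X be a Banach space and T : X → X a bounded linear operator. If T admits a distributionally irregular vector, then T is distributionally chaotic; moreover, the one-dimensional subspace spanned by a distributionally irregular vector is a distributionally ε-scrambled set for every ε > 0. -/
open Filter Topology
open scoped ENNReal

/-! Two vectors `c • x ≠ d • x` of `span {x}` have orbit distance `‖c - d‖ * ‖Tⁿ x‖`, so each level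
set `{n | ‖Tⁿ(c • x) - Tⁿ(d • x)‖ < r}` is a level set of `n ↦ ‖Tⁿ x‖`. It contains all but finitely
many terms of the density-one sequence along which `Tⁿ x → 0`, and its complement contains all but
finitely many terms of the one along which `‖Tⁿ x‖ → ∞`; discarding finitely many points does not
change an upper density equal to one. The span is uncountable because the scalar field is. -/

section Density

open Set

lemma ncard_Icc_one (n : ℕ) : (Icc 1 n).ncard = n := by
  simp

lemma ncard_inter_Icc_one_le (A : Set ℕ) (n : ℕ) : (A ∩ Icc 1 n).ncard ≤ n :=
  (ncard_le_ncard inter_subset_right (finite_Icc 1 n)).trans (ncard_Icc_one n).le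

lemma ncard_inter_Icc_one_add_ncard_compl_inter (S : Set ℕ) (n : ℕ) :
    (S ∩ Icc 1 n).ncard + (Sᶜ ∩ Icc 1 n).ncard = n := by
  conv_rhs => rw [← ncard_Icc_one n,
    ← ncard_inter_add_ncard_sdiff_eq_ncard (Icc 1 n) S (finite_Icc 1 n)]
  rw [inter_comm, sdiff_eq_compl_inter]

lemma densityRatio_mem_Icc (A : Set ℕ) (n : ℕ) :
    ((A ∩ Icc 1 n).ncard : ℝ) / n ∈ Icc 0 1 := by
  refine ⟨by positivity, div_le_one_of_le₀ ?_ n.cast_nonneg⟩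
  exact_mod_cast ncard_inter_Icc_one_le A n

lemma isBoundedUnder_le_densityRatio (A : Set ℕ) :
    IsBoundedUnder (· ≤ ·) atTop (fun n : ℕ => ((A ∩ Icc 1 n).ncard : ℝ) / n) :=
  isBoundedUnder_of ⟨1, fun n => (densityRatio_mem_Icc A n).2⟩

lemma isBoundedUnder_ge_densityRatio (A : Set ℕ) :
    IsBoundedUnder (· ≥ ·) atTop (fun n : ℕ => ((A ∩ Icc 1 n).ncard : ℝ) / n) :=
  isBoundedUnder_of ⟨0, fun n => (densityRatio_mem_Icc A n).1⟩

lemma upperDensity_le_one (A : Set ℕ) : upperDensity A ≤ 1 :=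
  limsup_le_of_le (isBoundedUnder_ge_densityRatio A).isCoboundedUnder_flip
    (.of_forall fun n => (densityRatio_mem_Icc A n).2)

lemma lowerDensity_nonneg (A : Set ℕ) : 0 ≤ lowerDensity A :=
  le_liminf_of_le (isBoundedUnder_le_densityRatio A).isCoboundedUnder_flip
    (.of_forall fun n => (densityRatio_mem_Icc A n).1)

lemma frequently_lt_densityRatio_of_upperDensity_eq_one {A : Set ℕ} (hA : upperDensity A = 1)
    {δ : ℝ} (hδ : 0 < δ) : ∃ᶠ n : ℕ in atTop, 1 - δ < ((A ∩ Icc 1 n).ncard : ℝ) / n :=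
  frequently_lt_of_lt_limsup (isBoundedUnder_ge_densityRatio A).isCoboundedUnder_flip
    (by rw [upperDensity] at hA; linarith)

lemma upperDensity_eq_one_of_diff_finite {A B : Set ℕ} (hA : upperDensity A = 1)
    (hAB : (A \ B).Finite) : upperDensity B = 1 := by
  refine le_antisymm (upperDensity_le_one B) (le_of_forall_pos_le_add fun δ hδ => ?_)
  rw [← sub_le_iff_le_add]
  refine le_limsup_of_frequently_le ?_ (isBoundedUnder_le_densityRatio B)
  have hc : ∀ᶠ n : ℕ in atTop, 0 < n ∧ ((A \ B).ncard : ℝ) / n < δ / 2 :=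
    (eventually_gt_atTop 0).and <|
      (tendsto_const_div_atTop_nhds_zero_nat _).eventually_lt_const (half_pos hδ)
  refine ((frequently_lt_densityRatio_of_upperDensity_eq_one hA (half_pos hδ)).and_eventually
    hc).mono fun n ⟨hAn, hn, hcn⟩ => ?_
  have hcount : ((A ∩ Icc 1 n).ncard : ℝ) ≤ (B ∩ Icc 1 n).ncard + (A \ B).ncard := by
    have hsub : A ∩ Icc 1 n ⊆ (B ∩ Icc 1 n) ∪ (A \ B) := fun m ⟨hmA, hm⟩ =>
      (em (m ∈ B)).imp (fun hmB => ⟨hmB, hm⟩) fun hmB => ⟨hmA, hmB⟩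
    exact_mod_cast (ncard_le_ncard hsub
      (((finite_Icc 1 n).subset inter_subset_right).union hAB)).trans (ncard_union_le _ _)
  have hratio : ((A ∩ Icc 1 n).ncard : ℝ) / n ≤
      ((B ∩ Icc 1 n).ncard : ℝ) / n + ((A \ B).ncard : ℝ) / n := by
    rw [← add_div]
    gcongr
  linarith

lemma upperDensity_eq_one_of_eventually_mem {a : ℕ → ℕ}
    (hA : upperDensity (range a) = 1) {S : Set ℕ} (hS : ∀ᶠ k in atTop, a k ∈ S) :
    upperDensity S = 1 := by
  obtain ⟨k₀, hk₀⟩ := eventually_atTop.mp hS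
  refine upperDensity_eq_one_of_diff_finite hA ((finite_Iio k₀).image a |>.subset ?_)
  rintro _ ⟨⟨k, rfl⟩, hkS⟩
  exact ⟨k, lt_of_not_ge fun hk => hkS (hk₀ k hk), rfl⟩

lemma lowerDensity_eq_zero_of_upperDensity_compl {S : Set ℕ} (h : upperDensity Sᶜ = 1) :
    lowerDensity S = 0 := by
  refine le_antisymm (le_of_forall_pos_le_add fun δ hδ => ?_) (lowerDensity_nonneg S)
  rw [zero_add]
  refine liminf_le_of_frequently_le ?_ (isBoundedUnder_ge_densityRatio S)
  refine ((frequently_lt_densityRatio_of_upperDensity_eq_one h hδ).and_eventually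
    (eventually_gt_atTop 0)).mono fun n ⟨hn, hn0⟩ => ?_
  have hsum : ((S ∩ Icc 1 n).ncard : ℝ) + (Sᶜ ∩ Icc 1 n).ncard = n := by
    exact_mod_cast ncard_inter_Icc_one_add_ncard_compl_inter S n
  have hn' : (0 : ℝ) < n := by exact_mod_cast hn0
  rw [div_le_iff₀ hn']
  rw [lt_div_iff₀ hn'] at hn
  linarith

end Density

lemma Submodule.not_countable_span_singleton {K V : Type*} [DivisionRing K] [Uncountable K]
    [AddCommGroup V] [Module K V] {x : V} (hx : x ≠ 0) :
    ¬ ((K ∙ x : Submodule K V) : Set V).Countable := by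
  rw [← Set.countable_coe_iff, ← not_uncountable_iff, not_not]
  exact (LinearEquiv.toSpanNonzeroSingleton K V x hx).toEquiv.injective.uncountable

namespace DistIrregularVector

variable {𝕜 : Type*} [RCLike 𝕜] {X : Type*} [NormedAddCommGroup X] [NormedSpace 𝕜 X]
  {T : X →L[𝕜] X} {x : X}

lemma ne_zero (hx : DistIrregularVector T x) : x ≠ 0 := by
  rintro rfl
  obtain ⟨-, b, -, -, -, -, -, -, -, hb⟩ := hx
  obtain ⟨k, hk⟩ := (hb.eventually_gt_atTop 0).exists
  simp at hk

lemma upperDensity_norm_lt_eq_one (hx : DistIrregularVector T x) {τ : ℝ} (hτ : 0 < τ) :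
    upperDensity {n | ‖(T ^ n) x‖ < τ} = 1 := by
  obtain ⟨a, -, -, -, -, -, ha, -, ha0, -⟩ := hx
  exact upperDensity_eq_one_of_eventually_mem ha (ha0.eventually_lt_const hτ)

lemma upperDensity_le_norm_eq_one (hx : DistIrregularVector T x) (M : ℝ) :
    upperDensity {n | M ≤ ‖(T ^ n) x‖} = 1 := by
  obtain ⟨-, b, -, -, -, -, -, hb, -, hbinf⟩ := hx
  exact upperDensity_eq_one_of_eventually_mem hb (hbinf.eventually_ge_atTop M)

lemma lowerDensity_norm_lt_eq_zero (hx : DistIrregularVector T x) (M : ℝ) :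
    lowerDensity {n | ‖(T ^ n) x‖ < M} = 0 :=
  lowerDensity_eq_zero_of_upperDensity_compl (by
    simpa only [Set.compl_ofPred, not_lt] using hx.upperDensity_le_norm_eq_one M)

lemma distScrambled_span_singleton (hx : DistIrregularVector T x) (ε : ℝ) :
    DistScrambled T ((𝕜 ∙ x : Submodule 𝕜 X) : Set X) ε := by
  rintro _ hu _ hv huv
  obtain ⟨c, rfl⟩ := Submodule.mem_span_singleton.mp hu
  obtain ⟨d, rfl⟩ := Submodule.mem_span_singleton.mp hv
  have hcd : 0 < ‖c - d‖ := norm_pos_iff.mpr (sub_ne_zero.mpr fun h => huv (by rw [h]))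
  have hlevel : ∀ r, {n : ℕ | ‖(T ^ n) (c • x) - (T ^ n) (d • x)‖ < r} =
      {n | ‖(T ^ n) x‖ < r / ‖c - d‖} := fun r => by
    ext n
    rw [Set.mem_ofPred_eq, Set.mem_ofPred_eq, ← map_sub, ← sub_smul, map_smul, norm_smul,
      lt_div_iff₀ hcd, mul_comm]
  refine ⟨?_, fun τ hτ => ?_⟩
  · rw [hlevel]
    exact hx.lowerDensity_norm_lt_eq_zero _
  · rw [hlevel]
    exact hx.upperDensity_norm_lt_eq_one (div_pos hτ hcd)

end DistIrregularVector

theorem distChaotic_of_distIrregularVector_general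
    {𝕜 : Type*} [RCLike 𝕜] {X : Type*} [NormedAddCommGroup X] [NormedSpace 𝕜 X]
    (T : X →L[𝕜] X) (x : X) (hx : DistIrregularVector T x) :
    DistChaotic T ∧
    ∀ ε > (0:ℝ), DistScrambled T ((Submodule.span 𝕜 {x} : Submodule 𝕜 X) : Set X) ε := by
  have : Uncountable 𝕜 := RCLike.ofReal_injective.uncountable
  exact ⟨⟨_, 1, one_pos, Submodule.not_countable_span_singleton hx.ne_zero,
    hx.distScrambled_span_singleton 1⟩, fun ε _ => hx.distScrambled_span_singleton ε⟩

/-- If `T` admits a distributionally irregular vector `x`, then `T` is distributionally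
chaotic; moreover `span {x}` is a distributionally `ε`-scrambled set for every `ε > 0`. -/
theorem distChaotic_of_distIrregularVector
    {𝕜 : Type*} [RCLike 𝕜] {X : Type*} [NormedAddCommGroup X] [NormedSpace 𝕜 X]
    [CompleteSpace X] (T : X →L[𝕜] X) (x : X) (hx : DistIrregularVector T x) :
    DistChaotic T ∧
    ∀ ε > (0:ℝ), DistScrambled T ((Submodule.span 𝕜 {x} : Submodule 𝕜 X) : Set X) ε :=
  distChaotic_of_distIrregularVector_general T x hx
end

section
/- Let X be a Banach space and T : X → X a bounded linear operator. The following are equivalent: (i) for every sequence of positive numbers (C_m) increasing to ∞ there exists a sequence (x_m) in X \ {0} with lim_{n→∞} T^n x_m = 0 for every m and a sequence of positive integers (N_m) increasing to ∞ such that lim_m (1/N_m)·card{0 ≤ i < N_m : ‖T^i x_m‖ ≥ C_m ‖x_m‖} = 1; (ii) T satisfies the Distributional Chaos Criterion. -/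
open Filter Topology
open scoped ENNReal

/-!
The criterion of Cao, Cui and Hou with `C m = m + 1` is the DCC with `y = x`. Conversely, given
the DCC data and constants `C m`, reindex along `k m ≥ 2 C m + 1` and replace `y (k m)` by a
vector `z m` of the span of the `x j` (whose orbits tend to `0`) so close to it that
`‖T^i (y - z)‖ < ‖y‖ / 2` for all `i ≤ N (k m)`. Whenever `‖T^i y‖ ≥ k m ‖y‖` this gives
`‖T^i z‖ ≥ C m ‖z‖`, so the proportion of such `i` can only grow.
-/

lemma ncard_setOf_lt_and_le (N : ℕ) (P : ℕ → Prop) : {i | i < N ∧ P i}.ncard ≤ N :=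
  (Set.ncard_le_ncard (fun _ hi => hi.1) (Set.finite_Iio N)).trans_eq (Set.ncard_Iio_nat N)

lemma tendsto_ncard_div_nhds_one_of_imp {ι : Type*} {l : Filter ι} {N : ι → ℕ}
    {P Q : ι → ℕ → Prop} (hPQ : ∀ m i, i < N m → P m i → Q m i)
    (hP : Tendsto (fun m => ({i | i < N m ∧ P m i}.ncard : ℝ) / N m) l (𝓝 1)) :
    Tendsto (fun m => ({i | i < N m ∧ Q m i}.ncard : ℝ) / N m) l (𝓝 1) := by
  refine tendsto_of_tendsto_of_tendsto_of_le_of_le hP tendsto_const_nhds (fun m => ?_) fun m =>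
    div_le_one_of_le₀ (Nat.cast_le.mpr (ncard_setOf_lt_and_le _ _)) (Nat.cast_nonneg _)
  have hsub : {i | i < N m ∧ P m i} ⊆ {i | i < N m ∧ Q m i} :=
    fun i ⟨hi, hPi⟩ => ⟨hi, hPQ m i hi hPi⟩
  exact div_le_div_of_nonneg_right
    (Nat.cast_le.mpr (Set.ncard_le_ncard hsub ((Set.finite_Iio _).subset fun _ hi => hi.1)))
    (Nat.cast_nonneg _)

lemma exists_monotone_tendsto_atTop_le {C : ℕ → ℝ} (hC : Monotone C) :
    ∃ k : ℕ → ℕ, Monotone k ∧ Tendsto k atTop atTop ∧ ∀ m, C m ≤ k m :=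
  ⟨fun m => max m ⌈C m⌉₊, fun _ _ h => max_le_max h (Nat.ceil_mono (hC h)),
    tendsto_atTop_mono (fun _ => le_max_left _ _) tendsto_id,
    fun _ => (Nat.le_ceil _).trans (mod_cast le_max_right _ _)⟩

lemma exists_mem_forall_dist_lt_of_mem_closure {α β ι : Type*} [TopologicalSpace α]
    [PseudoMetricSpace β] {s : Set α} {y : α} (hy : y ∈ closure s) {t : Set ι} (ht : t.Finite)
    {f : ι → α → β} (hf : ∀ i, Continuous (f i)) {ε : ℝ} (hε : 0 < ε) :
    ∃ z ∈ s, ∀ i ∈ t, dist (f i z) (f i y) < ε := by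
  have hU : IsOpen (⋂ i ∈ t, {z | dist (f i z) (f i y) < ε}) :=
    ht.isOpen_biInter fun i _ => isOpen_lt (by fun_prop) continuous_const
  obtain ⟨z, hzU, hzs⟩ := mem_closure_iff.mp hy _ hU (Set.mem_iInter₂.mpr fun i _ => by simpa)
  exact ⟨z, hzs, fun i hi => Set.mem_iInter₂.mp hzU i hi⟩

section Orbits

variable {𝕜 : Type*} [RCLike 𝕜] {X : Type*} [NormedAddCommGroup X] [NormedSpace 𝕜 X]
  (T : X →L[𝕜] X)

lemma tendsto_pow_apply_zero_of_mem_span {s : Set X}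
    (hs : ∀ v ∈ s, Tendsto (fun n => (T ^ n) v) atTop (𝓝 0)) {z : X}
    (hz : z ∈ Submodule.span 𝕜 s) : Tendsto (fun n => (T ^ n) z) atTop (𝓝 0) := by
  induction hz using Submodule.span_induction with
  | mem v hv => exact hs v hv
  | zero => simp
  | add a b _ _ ha hb => simpa using ha.add hb
  | smul c a _ ha => simpa using ha.const_smul c

lemma exists_mem_ne_zero_forall_mul_norm_le_norm_pow_apply {s : Set X} {y : X}
    (hy : y ∈ closure s) (hy0 : y ≠ 0) (N : ℕ) {C : ℝ} (hC : 0 ≤ C) :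
    ∃ z ∈ s, z ≠ 0 ∧ ∀ i < N, (2 * C + 1) * ‖y‖ ≤ ‖(T ^ i) y‖ → C * ‖z‖ ≤ ‖(T ^ i) z‖ := by
  have hy_pos : 0 < ‖y‖ := norm_pos_iff.mpr hy0
  obtain ⟨z, hzs, hz⟩ := exists_mem_forall_dist_lt_of_mem_closure hy (Set.finite_Iic N)
    (fun i => (T ^ i).continuous) (half_pos hy_pos)
  simp only [dist_eq_norm, Set.mem_Iic] at hz
  have hzy : ‖z - y‖ < ‖y‖ / 2 := by simpa using hz 0 (Nat.zero_le N)
  have hz_lower : ‖y‖ - ‖z‖ ≤ ‖z - y‖ := norm_sub_rev z y ▸ norm_sub_norm_le y z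
  have hz_upper : ‖z‖ - ‖y‖ ≤ ‖z - y‖ := norm_sub_norm_le z y
  refine ⟨z, hzs, norm_pos_iff.mp (by linarith), fun i hi hyi => ?_⟩
  have hTi := norm_sub_norm_le ((T ^ i) y) ((T ^ i) z)
  rw [norm_sub_rev] at hTi
  calc C * ‖z‖ ≤ C * (2 * ‖y‖) := by gcongr; linarith
    _ = (2 * C + 1) * ‖y‖ - ‖y‖ := by ring
    _ ≤ ‖(T ^ i) y‖ - ‖y‖ / 2 := by linarith
    _ ≤ ‖(T ^ i) z‖ := by linarith [hz i hi.le]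

end Orbits

theorem CCH_criterion_iff_DCC_general
    {𝕜 : Type*} [RCLike 𝕜] {X : Type*} [NormedAddCommGroup X] [NormedSpace 𝕜 X]
    (T : X →L[𝕜] X) :
    (∀ C : ℕ → ℝ, (∀ m, 0 < C m) → Monotone C →
        Filter.Tendsto C Filter.atTop Filter.atTop →
      ∃ x : ℕ → X, (∀ m, x m ≠ 0) ∧
        (∀ m, Filter.Tendsto (fun n : ℕ => (T ^ n) (x m)) Filter.atTop (nhds 0)) ∧
        ∃ N : ℕ → ℕ, (∀ m, 0 < N m) ∧ Monotone N ∧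
          Filter.Tendsto N Filter.atTop Filter.atTop ∧
          Filter.Tendsto (fun m : ℕ =>
              (({i : ℕ | i < N m ∧ C m * ‖x m‖ ≤ ‖(T ^ i) (x m)‖}).ncard : ℝ) / N m)
            Filter.atTop (nhds 1)) ↔
    DCCriterion T := by
  constructor
  · intro h
    obtain ⟨x, hx0, hxT, N, hN0, hNm, hNt, hlim⟩ := h (fun m => m + 1) (fun m => by positivity)
      (fun a b hab => by simpa using hab)
      (tendsto_atTop_add_const_right _ 1 tendsto_natCast_atTop_atTop)
    refine ⟨x, x, N, hx0, hx0, fun m => subset_closure (Submodule.subset_span ⟨m, rfl⟩), hxT, hN0,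
      hNm, hNt, tendsto_ncard_div_nhds_one_of_imp (fun m i _ hi => le_trans ?_ hi) hlim⟩
    gcongr
    linarith
  · rintro ⟨x, y, N, -, hy0, hyx, hxT, hN0, hNm, hNt, hlim⟩ C hC0 hCm -
    obtain ⟨k, hkm, hkt, hk⟩ :=
      exists_monotone_tendsto_atTop_le (C := fun m => 2 * C m + 1) fun a b h => by
        simpa using hCm h
    choose z hzs hz0 hzy using fun m =>
      exists_mem_ne_zero_forall_mul_norm_le_norm_pow_apply T (hyx (k m)) (hy0 (k m)) (N (k m))
        (hC0 m).le
    refine ⟨z, hz0, fun m => tendsto_pow_apply_zero_of_mem_span T ?_ (hzs m), N ∘ k,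
      fun m => hN0 _, hNm.comp hkm, hNt.comp hkt, tendsto_ncard_div_nhds_one_of_imp
        (fun m i hi hyi => hzy m i hi (le_trans ?_ hyi)) (hlim.comp hkt)⟩
    · rintro _ ⟨j, rfl⟩
      exact hxT j
    · gcongr
      exact hk m

/-- The criterion of Cao, Cui and Hou is equivalent to the Distributional Chaos Criterion. -/
theorem CCH_criterion_iff_DCC
    {𝕜 : Type*} [RCLike 𝕜] {X : Type*} [NormedAddCommGroup X] [NormedSpace 𝕜 X]
    [CompleteSpace X] (T : X →L[𝕜] X) :
    (∀ C : ℕ → ℝ, (∀ m, 0 < C m) → Monotone C →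
        Filter.Tendsto C Filter.atTop Filter.atTop →
      ∃ x : ℕ → X, (∀ m, x m ≠ 0) ∧
        (∀ m, Filter.Tendsto (fun n : ℕ => (T ^ n) (x m)) Filter.atTop (nhds 0)) ∧
        ∃ N : ℕ → ℕ, (∀ m, 0 < N m) ∧ Monotone N ∧
          Filter.Tendsto N Filter.atTop Filter.atTop ∧
          Filter.Tendsto (fun m : ℕ =>
              (({i : ℕ | i < N m ∧ C m * ‖x m‖ ≤ ‖(T ^ i) (x m)‖}).ncard : ℝ) / N m)
            Filter.atTop (nhds 1)) ↔
    DCCriterion T :=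
  CCH_criterion_iff_DCC_general T
end
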